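/- Let D be a STRIPS+ domain and let D* be the STRIPS domain obtained from D by pushing, for each action schema a(x) with precondition Φ_a(x,y,z), the variables y and z as additional explicit arguments, keeping the same precondition atoms and the same add and delete lists. Then for every instance with objects O, every state s, and every ground action a(o) of D: (1) a(o) is applicable in s in D if and only if there exist tuples o_y and o_z over O such that the ground STRIPS action a*(o, o_y, o_z) is applicable in s in D*; and (2) if moreover the z variables of a are determined by x in s, then for every such (o_y, o_z), the successor state of s under a*(o, o_y, o_z) in D* equals the successor state of s under a(o) in D (under any satisfying binding). That is, the semantics of a STRIPS+ action is exactly the semantics of its STRIPS translation with the implicit and existential variables made explicit. -/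

import Mathlib

/-! Core formalization of STRIPS+ domains. -/

/-- A variable of an action schema: explicit argument, existential variable, or
implicit argument variable. -/
inductive SVar (nx ny nz : ℕ) : Type
  | expl : Fin nx → SVar nx ny nz
  | exist : Fin ny → SVar nx ny nz
  | impl : Fin nz → SVar nx ny nz

/-- An action schema: explicit arguments `x = (x_1,…,x_nx)`, existential variables
`y`, implicit argument variables `z`, a precondition given as a finite conjunction
(list) of lifted atoms, and add and delete lists of lifted atoms. -/
structure Schema (Pred : Type) : Type where
  nx : ℕ
  ny : ℕ
  nz : ℕ
  pre : List (Pred × List (SVar nx ny nz))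
  add : List (Pred × List (SVar nx ny nz))
  del : List (Pred × List (SVar nx ny nz))

/-- A STRIPS+ domain: predicate symbols with arities and action schemas. -/
structure Domain (Pred Act : Type) : Type where
  arity : Pred → ℕ
  schema : Act → Schema Pred

/-- Syntactic well-formedness of a STRIPS+ domain: every atom respects the arity of
its predicate, and the existential `y` variables occur in no effect. -/
def ValidDomain {Pred Act : Type} (D : Domain Pred Act) : Prop :=
  ∀ a : Act,
    (∀ atm ∈ (D.schema a).pre, atm.2.length = D.arity atm.1) ∧
    (∀ atm ∈ (D.schema a).add ++ (D.schema a).del,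
       atm.2.length = D.arity atm.1 ∧ ∀ j, SVar.exist j ∉ atm.2)

/-- A ground atom `p(o_1,…,o_k)`. -/
abbrev GAtom (Pred Obj : Type) := Pred × List Obj

/-- A state: a set of ground atoms. -/
abbrev PState (Pred Obj : Type) := Set (GAtom Pred Obj)

/-- The ground instance of a lifted atom under a binding `σ`. -/
def groundAtom {nx ny nz : ℕ} {Pred Obj : Type} (σ : SVar nx ny nz → Obj)
    (atm : Pred × List (SVar nx ny nz)) : GAtom Pred Obj :=
  (atm.1, atm.2.map σ)

variable {Pred Pred' Act Obj : Type}

/-- A binding binds the explicit arguments `x` to the tuple `o`. -/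
def BindsArgs {nx ny nz : ℕ} (σ : SVar nx ny nz → Obj) (o : List Obj) : Prop :=
  o = List.ofFn (fun i : Fin nx => σ (SVar.expl i))

/-- A binding `σ` satisfies the precondition `Φ_a` in state `s` if it grounds every
atom of `Φ_a` to an atom of `s`. -/
def Sat (D : Domain Pred Act) (a : Act)
    (σ : SVar (D.schema a).nx (D.schema a).ny (D.schema a).nz → Obj)
    (s : PState Pred Obj) : Prop :=
  ∀ atm ∈ (D.schema a).pre, groundAtom σ atm ∈ s

/-- The ground add effects of schema `a` under binding `σ`. -/
def addSet (D : Domain Pred Act) (a : Act)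
    (σ : SVar (D.schema a).nx (D.schema a).ny (D.schema a).nz → Obj) :
    Set (GAtom Pred Obj) :=
  {q | ∃ atm ∈ (D.schema a).add, q = groundAtom σ atm}

/-- The ground delete effects of schema `a` under binding `σ`. -/
def delSet (D : Domain Pred Act) (a : Act)
    (σ : SVar (D.schema a).nx (D.schema a).ny (D.schema a).nz → Obj) :
    Set (GAtom Pred Obj) :=
  {q | ∃ atm ∈ (D.schema a).del, q = groundAtom σ atm}

/-- Applying action `a` under binding `σ` in state `s`. -/
def applyAct (D : Domain Pred Act) (a : Act)
    (σ : SVar (D.schema a).nx (D.schema a).ny (D.schema a).nz → Obj)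
    (s : PState Pred Obj) : PState Pred Obj :=
  (s \ delSet D a σ) ∪ addSet D a σ

/-- The ground action `a(o)` is applicable in `s`: some binding with `x := o`
satisfies `Φ_a` in `s`. -/
def Applicable (D : Domain Pred Act) (a : Act) (o : List Obj) (s : PState Pred Obj) : Prop :=
  ∃ σ, BindsArgs σ o ∧ Sat D a σ s

/-- One transition step of the domain. -/
def Step (D : Domain Pred Act) (s s' : PState Pred Obj) : Prop :=
  ∃ a σ, Sat D a σ s ∧ s' = applyAct D a σ s

/-- `Reachable D s s'`: state `s'` is reachable from `s` by applicable ground actions. -/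
def Reachable (D : Domain Pred Act) : PState Pred Obj → PState Pred Obj → Prop :=
  Relation.ReflTransGen (Step D)

/-- A STRIPS+ domain is well-formed if in every reachable state of any instance, no
applicable ground action adds an atom that is already true nor deletes one that is
already false. -/
def WellFormed (D : Domain Pred Act) : Prop :=
  ∀ (Obj : Type) (init s : PState Pred Obj), Reachable D init s →
    ∀ (a : Act) (σ : SVar (D.schema a).nx (D.schema a).ny (D.schema a).nz → Obj),
      Sat D a σ s →
        (∀ q ∈ addSet D a σ, q ∉ s) ∧ (∀ q ∈ delSet D a σ, q ∈ s)

/-- A STRIPS+ domain is strongly connected if in every instance every state reachable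
from the initial state can reach the initial state back. -/
def StronglyConnected (D : Domain Pred Act) : Prop :=
  ∀ (Obj : Type) (init s : PState Pred Obj), Reachable D init s → Reachable D s init

/-- An execution of the ground-action sequence `τ` along hidden states `sts`. -/
def Execution (D : Domain Pred Act) (τ : List (Act × List Obj))
    (sts : ℕ → PState Pred Obj) : Prop :=
  ∀ i : Fin τ.length, ∃ σ,
    BindsArgs σ (τ.get i).2 ∧ Sat D (τ.get i).1 σ (sts i) ∧
    sts ((i : ℕ) + 1) = applyAct D (τ.get i).1 σ (sts i)

/-- An action trace of `D`: a ground action sequence applicable from a state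
reachable from the initial state of an instance of `D`. -/
def ActionTrace (D : Domain Pred Act) (τ : List (Act × List Obj)) : Prop :=
  ∃ (init : PState Pred Obj) (sts : ℕ → PState Pred Obj),
    Reachable D init (sts 0) ∧ Execution D τ sts

/-- An action trace `τ` is negative for a domain `D`: with the effects of each action
in `τ` grounded (implicit variables set by the preconditions of `D` along an
execution of `τ`), some action `a_i(o_i)` in `τ` has a ground precondition atom `q`
deleted by an earlier action `a_j(o_j)` and not re-added by any action in between. -/
def NegFor (D : Domain Pred Act) (τ : List (Act × List Obj)) : Prop :=
  ∃ (sts : ℕ → PState Pred Obj)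
    (σs : ∀ i : Fin τ.length,
      SVar (D.schema (τ.get i).1).nx (D.schema (τ.get i).1).ny (D.schema (τ.get i).1).nz → Obj),
    (∀ i : Fin τ.length,
        BindsArgs (σs i) (τ.get i).2 ∧
        sts ((i : ℕ) + 1) = applyAct D (τ.get i).1 (σs i) (sts i) ∧
        (Applicable D (τ.get i).1 (τ.get i).2 (sts i) → Sat D (τ.get i).1 (σs i) (sts i))) ∧
    ∃ (i j : Fin τ.length), (j : ℕ) < (i : ℕ) ∧
      ∃ q : GAtom Pred Obj,
        (∃ atm ∈ (D.schema (τ.get i).1).pre, q = groundAtom (σs i) atm) ∧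
        q ∈ delSet D (τ.get j).1 (σs j) ∧
        ∀ l : Fin τ.length, (j : ℕ) < (l : ℕ) → (l : ℕ) < (i : ℕ) →
          q ∉ addSet D (τ.get l).1 (σs l)

/-- An action trace is positive for `D` if it is not negative for `D`. -/
def PosFor (D : Domain Pred Act) (τ : List (Act × List Obj)) : Prop :=
  ¬ NegFor D τ

/-- `D'` is equivalent to `D`: every action trace of `D` that is positive for `D` is
positive for `D'`, and every action trace of `D` that is negative for `D` is negative
for `D'`. -/
def Equivalent (D : Domain Pred Act) (D' : Domain Pred' Act) : Prop :=
  ∀ (Obj : Type) (τ : List (Act × List Obj)), ActionTrace D τ →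
    (PosFor D τ → PosFor D' τ) ∧ (NegFor D τ → NegFor D' τ)

/-- The atom `atm` belongs to the subquery `Q^i` of schema `sch`: it is a
precondition atom containing `z_i` and no `z_j` with `j > i`. -/
def InSubquery {P : Type} (sch : Schema P) (i : Fin sch.nz)
    (atm : P × List (SVar sch.nx sch.ny sch.nz)) : Prop :=
  atm ∈ sch.pre ∧ SVar.impl i ∈ atm.2 ∧ ∀ j, i < j → SVar.impl j ∉ atm.2

/-- Stratification: each subquery `Q^i` determines the value of `z_i` given `x` and
`z_1,…,z_{i-1}` in every state where a ground instance of the schema is applicable. -/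
def Stratified (D : Domain Pred Act) : Prop :=
  ∀ (Obj : Type) (s : PState Pred Obj) (a : Act) (o : List Obj),
    Applicable D a o s →
    ∀ (i : Fin (D.schema a).nz)
      (σ σ' : SVar (D.schema a).nx (D.schema a).ny (D.schema a).nz → Obj),
      BindsArgs σ o → BindsArgs σ' o →
      (∀ atm, InSubquery (D.schema a) i atm → groundAtom σ atm ∈ s) →
      (∀ atm, InSubquery (D.schema a) i atm → groundAtom σ' atm ∈ s) →
      (∀ j, j < i → σ (SVar.impl j) = σ' (SVar.impl j)) →
      σ (SVar.impl i) = σ' (SVar.impl i)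

/-- Vertices of the dependency graph of a domain: the predicates and the implicit
variables `z_i^a` of the schemas. -/
def DepVert (D : Domain Pred Act) : Type :=
  Pred ⊕ (Σ a : Act, Fin (D.schema a).nz)

/-- Some `p`-effect of the schema involves `z_i`. -/
def OccursInEff {P : Type} (sch : Schema P) (p : P) (i : Fin sch.nz) : Prop :=
  ∃ atm, (atm ∈ sch.add ∨ atm ∈ sch.del) ∧ atm.1 = p ∧ SVar.impl i ∈ atm.2

/-- Edges of the dependency graph `G_D`. -/
def DepEdge (D : Domain Pred Act) (u v : DepVert D) : Prop :=
  (∃ p a i, u = Sum.inl p ∧ v = Sum.inr ⟨a, i⟩ ∧ OccursInEff (D.schema a) p i) ∨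
  (∃ a i p, u = Sum.inr ⟨a, i⟩ ∧ v = Sum.inl p ∧
     ∃ atm, InSubquery (D.schema a) i atm ∧ atm.1 = p) ∨
  (∃ (a : Act) (i : Fin (D.schema a).nz) (j : Fin (D.schema a).nz), i < j ∧ u = Sum.inr ⟨a, j⟩ ∧ v = Sum.inr ⟨a, i⟩ ∧
     ∃ atm ∈ (D.schema a).pre, SVar.impl i ∈ atm.2 ∧ SVar.impl j ∈ atm.2)

/-- A directed graph is acyclic with all directed paths of length at most `d`. -/
def AcyclicRankLe {V : Type} (E : V → V → Prop) (d : ℕ) : Prop :=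
  (∀ v, ¬ Relation.TransGen E v v) ∧
  ∀ (k : ℕ) (f : Fin (k + 1) → V),
    (∀ i : Fin k, E (f i.castSucc) (f i.succ)) → k ≤ d

/-- An extended trace: a ground action sequence together with annotated pairs of time
points whose hidden states are equal. -/
structure ExtTrace (Act Obj : Type) : Type where
  acts : List (Act × List Obj)
  eqs : List (ℕ × ℕ)

/-- The extended trace `t` is realizable in `D`: it is an action trace of `D` with an
execution whose hidden states are equal at the annotated time points. -/
def RealizableExt (D : Domain Pred Act) (t : ExtTrace Act Obj) : Prop :=
  ∃ (init : PState Pred Obj) (sts : ℕ → PState Pred Obj),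
    Reachable D init (sts 0) ∧ Execution D t.acts sts ∧
    ∀ pr ∈ t.eqs, pr.1 ≤ t.acts.length → pr.2 ≤ t.acts.length → sts pr.1 = sts pr.2

/-- Reindexing of schema variables when the existential `y` and implicit `z`
variables are pushed as additional explicit arguments after the `x` variables. -/
def pushIdx {nx ny nz : ℕ} : SVar nx ny nz → Fin (nx + ny + nz)
  | .expl i => (i.castAdd ny).castAdd nz
  | .exist j => (Fin.natAdd nx j).castAdd nz
  | .impl l => Fin.natAdd (nx + ny) l

/-- Translation of a lifted atom under the pushing of variables. -/
def pushAtom {P : Type} {nx ny nz : ℕ} (atm : P × List (SVar nx ny nz)) :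
    P × List (SVar (nx + ny + nz) 0 0) :=
  (atm.1, atm.2.map (fun v => SVar.expl (pushIdx v)))

/-- The STRIPS schema obtained from a STRIPS+ schema by pushing the `y` and `z`
variables as additional explicit arguments, keeping the same precondition atoms and
the same add and delete lists. -/
def pushSchema {P : Type} (sch : Schema P) : Schema P where
  nx := sch.nx + sch.ny + sch.nz
  ny := 0
  nz := 0
  pre := sch.pre.map pushAtom
  add := sch.add.map pushAtom
  del := sch.del.map pushAtom

/-- The STRIPS domain `D*` obtained from a STRIPS+ domain `D` by pushing, for each
action schema, the `y` and `z` variables as additional explicit arguments. -/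
def pushDomain {Pred Act : Type} (D : Domain Pred Act) : Domain Pred Act :=
  ⟨D.arity, fun a => pushSchema (D.schema a)⟩

/-- The implicit variables `z` of schema `a` are determined by `x := o` in state `s`:
all bindings satisfying `Φ_a` in `s` with `x := o` agree on the values of `z`. -/
def Determined {Pred Act Obj : Type} (D : Domain Pred Act) (a : Act) (o : List Obj)
    (s : PState Pred Obj) : Prop :=
  ∀ σ σ', BindsArgs σ o → Sat D a σ s → BindsArgs σ' o → Sat D a σ' s →
    ∀ i, σ (SVar.impl i) = σ' (SVar.impl i)

/-! The pushed schema has the variables `x ++ y ++ z` as its explicit arguments, laid out by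
`pushIdx`. A binding of it is the same as a binding of the original schema, and this
correspondence commutes with grounding, so corresponding bindings satisfy the same
preconditions. The effects of `a(o)` only mention `x`, which `o` fixes, and `z`, which
determinacy fixes: the existential `y` occur in no effect. Hence every satisfying binding
yields the same successor state in both domains. -/

section Push

variable {nx ny nz : ℕ}

def pullBind (σstar : SVar (nx + ny + nz) 0 0 → Obj) : SVar nx ny nz → Obj :=
  fun v => σstar (.expl (pushIdx v))

def pushBind (σ : SVar nx ny nz → Obj) : SVar (nx + ny + nz) 0 0 → Obj
  | .expl k => Fin.append (Fin.append (σ ∘ .expl) (σ ∘ .exist)) (σ ∘ .impl) k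
  | .exist j => j.elim0
  | .impl l => l.elim0

@[simp]
theorem pullBind_pushBind (σ : SVar nx ny nz → Obj) : pullBind (pushBind σ) = σ := by
  funext v
  cases v <;> simp [pullBind, pushBind, pushIdx]

theorem ofFn_expl_eq_append (σstar : SVar (nx + ny + nz) 0 0 → Obj) :
    List.ofFn (fun k => σstar (.expl k)) =
      List.ofFn (fun i => pullBind σstar (.expl i)) ++
        List.ofFn (fun j => pullBind σstar (.exist j)) ++
        List.ofFn (fun l => pullBind σstar (.impl l)) := by
  rw [List.ofFn_add, List.ofFn_add]
  rfl

theorem BindsArgs.pushBind {σ : SVar nx ny nz → Obj} {o : List Obj} (h : BindsArgs σ o) :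
    BindsArgs (pushBind σ)
      (o ++ List.ofFn (fun j => σ (.exist j)) ++ List.ofFn (fun l => σ (.impl l))) := by
  rw [BindsArgs, ofFn_expl_eq_append, pullBind_pushBind, h]

theorem BindsArgs.pullBind {σstar : SVar (nx + ny + nz) 0 0 → Obj} {o oy oz : List Obj}
    (h : BindsArgs σstar (o ++ oy ++ oz)) (hy : oy.length = ny) (hz : oz.length = nz) :
    BindsArgs (pullBind σstar) o := by
  rw [BindsArgs, ofFn_expl_eq_append] at h
  obtain ⟨h, -⟩ := List.append_inj' h (by simpa using hz)
  exact (List.append_inj' h (by simpa using hy)).1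

theorem BindsArgs.apply_expl_eq {σ τ : SVar nx ny nz → Obj} {o : List Obj}
    (hσ : BindsArgs σ o) (hτ : BindsArgs τ o) (i : Fin nx) :
    σ (.expl i) = τ (.expl i) :=
  congrFun (List.ofFn_inj.mp (hσ.symm.trans hτ)) i

theorem groundAtom_pushAtom (σstar : SVar (nx + ny + nz) 0 0 → Obj)
    (atm : Pred × List (SVar nx ny nz)) :
    groundAtom σstar (pushAtom atm) = groundAtom (pullBind σstar) atm := by
  simp [groundAtom, pushAtom, pullBind]

theorem forall_mem_map_pushAtom_iff (σstar : SVar (nx + ny + nz) 0 0 → Obj)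
    (l : List (Pred × List (SVar nx ny nz))) (s : PState Pred Obj) :
    (∀ atm ∈ l.map pushAtom, groundAtom σstar atm ∈ s) ↔
      ∀ atm ∈ l, groundAtom (pullBind σstar) atm ∈ s := by
  simp only [List.forall_mem_map, groundAtom_pushAtom]

theorem exists_mem_map_pushAtom_iff (σstar : SVar (nx + ny + nz) 0 0 → Obj)
    (l : List (Pred × List (SVar nx ny nz))) (q : GAtom Pred Obj) :
    (∃ atm ∈ l.map pushAtom, q = groundAtom σstar atm) ↔
      ∃ atm ∈ l, q = groundAtom (pullBind σstar) atm := by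
  simp only [List.mem_map, exists_exists_and_eq_and, groundAtom_pushAtom]

end Push

section PushDomain

variable (D : Domain Pred Act) (a : Act)
  (σstar : SVar ((D.schema a).nx + (D.schema a).ny + (D.schema a).nz) 0 0 → Obj)

theorem sat_pushDomain_iff (s : PState Pred Obj) :
    Sat (pushDomain D) a σstar s ↔ Sat D a (pullBind σstar) s :=
  forall_mem_map_pushAtom_iff σstar _ s

theorem addSet_pushDomain : addSet (pushDomain D) a σstar = addSet D a (pullBind σstar) :=
  Set.ext fun q => exists_mem_map_pushAtom_iff σstar _ q

theorem delSet_pushDomain : delSet (pushDomain D) a σstar = delSet D a (pullBind σstar) :=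
  Set.ext fun q => exists_mem_map_pushAtom_iff σstar _ q

theorem applyAct_pushDomain (s : PState Pred Obj) :
    applyAct (pushDomain D) a σstar s = applyAct D a (pullBind σstar) s := by
  unfold applyAct
  rw [addSet_pushDomain, delSet_pushDomain]

end PushDomain

theorem groundAtom_congr {nx ny nz : ℕ} {σ τ : SVar nx ny nz → Obj}
    {atm : Pred × List (SVar nx ny nz)} (h : ∀ v ∈ atm.2, σ v = τ v) :
    groundAtom σ atm = groundAtom τ atm := by
  rw [groundAtom, groundAtom, List.map_congr_left h]

theorem applyAct_congr {D : Domain Pred Act} {a : Act}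
    {σ τ : SVar (D.schema a).nx (D.schema a).ny (D.schema a).nz → Obj}
    (h : ∀ atm ∈ (D.schema a).add ++ (D.schema a).del, ∀ v ∈ atm.2, σ v = τ v)
    (s : PState Pred Obj) :
    applyAct D a σ s = applyAct D a τ s := by
  have hadd : addSet D a σ = addSet D a τ :=
    Set.ext fun _ => exists_congr fun atm => and_congr_right fun hatm => by
      rw [groundAtom_congr (h atm (List.mem_append_left _ hatm))]
  have hdel : delSet D a σ = delSet D a τ :=
    Set.ext fun _ => exists_congr fun atm => and_congr_right fun hatm => by
      rw [groundAtom_congr (h atm (List.mem_append_right _ hatm))]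
  unfold applyAct
  rw [hadd, hdel]

/-- **STRIPS+ semantics = STRIPS translation**: for every state `s` and ground
STRIPS+ action `a(o)`: (1) `a(o)` is applicable in `s` in `D` iff there are tuples
`o_y, o_z` over the objects such that the ground STRIPS action `a*(o, o_y, o_z)` of
the pushed domain `D*` is applicable in `s`; and (2) if moreover the `z` variables
of `a` are determined by `x` in `s`, then for every such `(o_y, o_z)` the successor
state of `s` under `a*(o, o_y, o_z)` in `D*` equals the successor state of `s` under
`a(o)` in `D` (under any satisfying binding). -/
theorem stripsPlus_semantics_push {Pred Act Obj : Type}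
    (D : Domain Pred Act) (hvalid : ValidDomain D)
    (a : Act) (o : List Obj) (s : PState Pred Obj) :
    (Applicable D a o s ↔
      ∃ oy oz : List Obj, oy.length = (D.schema a).ny ∧ oz.length = (D.schema a).nz ∧
        Applicable (pushDomain D) a (o ++ oy ++ oz) s) ∧
    (Applicable D a o s → Determined D a o s →
      ∀ oy oz : List Obj, oy.length = (D.schema a).ny → oz.length = (D.schema a).nz →
        ∀ σstar, BindsArgs σstar (o ++ oy ++ oz) → Sat (pushDomain D) a σstar s →
          ∀ σ, BindsArgs σ o → Sat D a σ s →
            applyAct (pushDomain D) a σstar s = applyAct D a σ s) := by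
  refine ⟨⟨?_, ?_⟩, ?_⟩
  · rintro ⟨σ, hσ, hsat⟩
    exact ⟨_, _, List.length_ofFn, List.length_ofFn, pushBind σ, hσ.pushBind,
      (sat_pushDomain_iff D a _ s).2 (by rwa [pullBind_pushBind])⟩
  · rintro ⟨oy, oz, hy, hz, σstar, hσstar, hsat⟩
    exact ⟨pullBind σstar, hσstar.pullBind hy hz, (sat_pushDomain_iff D a σstar s).1 hsat⟩
  · rintro - hdet oy oz hy hz σstar hσstar hsatstar σ hσ hsat
    have hpull := hσstar.pullBind hy hz
    refine (applyAct_pushDomain D a σstar s).trans (applyAct_congr (fun atm hatm v hv => ?_) s)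
    cases v with
    | expl i => exact hpull.apply_expl_eq hσ i
    | exist j => exact absurd hv (((hvalid a).2 atm hatm).2 j)
    | impl l => exact hdet _ _ hpull ((sat_pushDomain_iff D a σstar s).1 hsatstar) hσ hsat l
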